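/- Let H = ℂ² ⊗ ℂ² ⊗ ℂ² with the induced inner product, let |0⟩, |1⟩ be the standard orthonormal basis of ℂ², and let GHZ = |0⟩⊗|0⟩⊗|0⟩ + |1⟩⊗|1⟩⊗|1⟩. Then the set S_GHZ of normalized vectors of the form (A ⊗ B ⊗ C)·GHZ / ‖(A ⊗ B ⊗ C)·GHZ‖, where A, B, C range over invertible 2×2 complex matrices, is dense in the unit sphere of H: for every unit vector ψ ∈ H and every δ > 0 there exist invertible A, B, C with ‖ψ − (A ⊗ B ⊗ C)·GHZ / ‖(A ⊗ B ⊗ C)·GHZ‖‖ < δ. Consequently E(ψ, S_GHZ) = 1 − sup_{φ∈S_GHZ} |⟨ψ, φ⟩|² = 0 for every unit vector ψ. -/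

import Mathlib

open scoped InnerProductSpace

/-- The three-qubit Hilbert space `ℂ² ⊗ ℂ² ⊗ ℂ²`, modelled concretely as
`EuclideanSpace ℂ (Fin 2 × Fin 2 × Fin 2)` via the standard product basis. -/
noncomputable abbrev ThreeQubits := EuclideanSpace ℂ (Fin 2 × Fin 2 × Fin 2)

/-- The (unnormalized) GHZ state `|000⟩ + |111⟩`. -/
noncomputable def ghz : ThreeQubits :=
  EuclideanSpace.single (0, 0, 0) 1 + EuclideanSpace.single (1, 1, 1) 1

/-- The matrix of the local operator `A ⊗ B ⊗ C` in the product basis. -/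
noncomputable def kron3 (A B C : Matrix (Fin 2) (Fin 2) ℂ) :
    Matrix (Fin 2 × Fin 2 × Fin 2) (Fin 2 × Fin 2 × Fin 2) ℂ :=
  fun x y => A x.1 y.1 * B x.2.1 y.2.1 * C x.2.2 y.2.2

/-- The action of the local operator `A ⊗ B ⊗ C` on a three-qubit state. -/
noncomputable def applyKron3 (A B C : Matrix (Fin 2) (Fin 2) ℂ) (ψ : ThreeQubits) :
    ThreeQubits :=
  (WithLp.equiv 2 _).symm ((kron3 A B C).mulVec ((WithLp.equiv 2 _) ψ))

/-- The set `S_GHZ`: all normalized images `(A ⊗ B ⊗ C)·GHZ / ‖(A ⊗ B ⊗ C)·GHZ‖` of the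
GHZ state under invertible local operators. -/
noncomputable def ghzClass : Set ThreeQubits :=
  {φ | ∃ A B C : Matrix (Fin 2) (Fin 2) ℂ, IsUnit A ∧ IsUnit B ∧ IsUnit C ∧
    φ = ‖applyKron3 A B C ghz‖⁻¹ • applyKron3 A B C ghz}

/-!
Write `T₀, T₁` for the two slices of a tensor `t`. If `det T₁ ≠ 0` and the hyperdeterminant
(the discriminant of `λ ↦ det (T₀ + λ T₁)`) is nonzero, the two distinct roots `λ₀, λ₁` make
`T₀ + λᵢ T₁ = vᵢ wᵢᵀ` rank one, and both slices are combinations of these two rank-one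
matrices: this is `t = (A ⊗ B ⊗ C)·GHZ` with `B = [v₀ v₁]`, `C = [w₀ w₁]` invertible.
The product of the two conditions is a polynomial that does not vanish identically, so by the
identity theorem its nonvanishing set is dense; normalisation is continuous on the unit sphere,
so `S_GHZ` is dense there, which forces `sup_{φ ∈ S_GHZ} |⟨ψ, φ⟩|² = 1`.
-/

open Matrix Topology

@[fun_prop]
lemma EuclideanSpace.analyticAt_apply {𝕜 ι : Type*} [RCLike 𝕜] [Fintype ι] (i : ι)
    (x : EuclideanSpace 𝕜 ι) : AnalyticAt 𝕜 (fun t : EuclideanSpace 𝕜 ι => t i) x :=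
  (EuclideanSpace.proj (𝕜 := 𝕜) i).analyticAt x

lemma AnalyticOnNhd.dense_setOf_ne_zero {𝕜 E F : Type*} [NontriviallyNormedField 𝕜]
    [NormedAddCommGroup E] [NormedSpace 𝕜 E] [PreconnectedSpace E] [NormedAddCommGroup F]
    [NormedSpace 𝕜 F] {f : E → F} (hf : AnalyticOnNhd 𝕜 f Set.univ) (hf₀ : f ≠ 0) :
    Dense {x | f x ≠ 0} := by
  intro x
  by_contra hx
  refine hf₀ (hf.eq_of_eventuallyEq analyticOnNhd_const (z₀ := x) ?_)
  filter_upwards [isClosed_closure.isOpen_compl.mem_nhds hx] with y hy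
  by_contra hy₀
  exact hy (subset_closure hy₀)

lemma iSup_norm_inner_sq_eq_one {𝕜 E : Type*} [RCLike 𝕜] [NormedAddCommGroup E]
    [InnerProductSpace 𝕜 E] {S : Set E} {ψ : E} (hψ : ‖ψ‖ = 1) (hS : ∀ φ ∈ S, ‖φ‖ ≤ 1)
    (hψS : ψ ∈ closure S) : ⨆ φ : S, ‖⟪ψ, (φ : E)⟫_𝕜‖ ^ 2 = 1 := by
  have : Nonempty S := (closure_nonempty_iff.1 ⟨ψ, hψS⟩).to_subtype
  have hle : ∀ φ : S, ‖⟪ψ, (φ : E)⟫_𝕜‖ ^ 2 ≤ 1 := fun φ =>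
    pow_le_one₀ (norm_nonneg _) <| (norm_inner_le_norm _ _).trans <| by
      rw [hψ, one_mul]; exact hS φ φ.2
  refine le_antisymm (ciSup_le hle) (le_of_forall_lt fun c hc => ?_)
  have hnhds : {φ | c < ‖⟪ψ, φ⟫_𝕜‖ ^ 2} ∈ 𝓝 ψ :=
    (isOpen_lt continuous_const (by fun_prop)).mem_nhds (by simpa [inner_self_eq_norm_sq_to_K, hψ])
  obtain ⟨φ, hφc, hφS⟩ := mem_closure_iff_nhds.1 hψS _ hnhds
  exact hφc.trans_le (le_ciSup ⟨1, Set.forall_mem_range.2 hle⟩ (⟨φ, hφS⟩ : S))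

section TwoByTwo

variable {K : Type*} [Field K]

/-- Cayley's hyperdeterminant of the `2 × 2 × 2` array with slices `M` and `N`: the discriminant
of the binary quadratic form `(x, y) ↦ det (x • M + y • N)`. -/
def hyperdet (M N : Matrix (Fin 2) (Fin 2) K) : K :=
  discrim N.det ((M + N).det - M.det - N.det) M.det

lemma det_add_smul_fin_two (M N : Matrix (Fin 2) (Fin 2) K) (c : K) :
    (M + c • N).det = N.det * (c * c) + ((M + N).det - M.det - N.det) * c + M.det := by
  simp only [det_fin_two, Matrix.add_apply, Matrix.smul_apply, smul_eq_mul]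
  ring

lemma exists_vecMulVec_eq_of_det_eq_zero {M : Matrix (Fin 2) (Fin 2) K} (h : M.det = 0) :
    ∃ v w : Fin 2 → K, M = vecMulVec v w := by
  rw [det_fin_two] at h
  by_cases h00 : M 0 0 = 0
  · by_cases h01 : M 0 1 = 0
    · refine ⟨![0, 1], M 1, ?_⟩
      ext i j; fin_cases i <;> fin_cases j <;> simp [vecMulVec, h00, h01]
    · have h10 : M 1 0 = 0 := by simpa [h00, h01] using h
      refine ⟨![M 0 1, M 1 1], ![0, 1], ?_⟩
      ext i j; fin_cases i <;> fin_cases j <;> simp [vecMulVec, h00, h10]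
  · refine ⟨![M 0 0, M 1 0], ![1, M 0 1 / M 0 0], ?_⟩
    ext i j; fin_cases i <;> fin_cases j <;> simp [vecMulVec] <;> field_simp
    linear_combination h

lemma det_vecMulVec_sub_vecMulVec (v₀ v₁ w₀ w₁ : Fin 2 → K) :
    (vecMulVec v₀ w₀ - vecMulVec v₁ w₁).det = -((of ![v₀, v₁]).det * (of ![w₀, w₁]).det) := by
  simp only [det_fin_two, Matrix.sub_apply, vecMulVec_apply, of_apply, Matrix.cons_val_zero,
    Matrix.cons_val_one]
  ring

lemma exists_ne_roots_of_discrim_ne_zero [IsAlgClosed K] [NeZero (2 : K)] {a b c : K}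
    (ha : a ≠ 0) (hΔ : discrim a b c ≠ 0) :
    ∃ x y, x ≠ y ∧ a * (x * x) + b * x + c = 0 ∧ a * (y * y) + b * y + c = 0 := by
  obtain ⟨s, hs⟩ := IsAlgClosed.exists_eq_mul_self (discrim a b c)
  have hs0 : s ≠ 0 := by rintro rfl; simp_all
  refine ⟨(-b + s) / (2 * a), (-b - s) / (2 * a), ?_, (quadratic_eq_zero_iff ha hs _).2 (.inl rfl),
    (quadratic_eq_zero_iff ha hs _).2 (.inr rfl)⟩
  rw [Ne, div_left_inj' (mul_ne_zero two_ne_zero ha)]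
  intro h
  have h2s : (2 : K) * s = 0 := by linear_combination h
  exact hs0 ((mul_eq_zero.1 h2s).resolve_left two_ne_zero)

lemma exists_sum_smul_vecMulVec_of_hyperdet_ne_zero [IsAlgClosed K] [NeZero (2 : K)]
    (T : Fin 2 → Matrix (Fin 2) (Fin 2) K) (hT₁ : (T 1).det ≠ 0) (hΔ : hyperdet (T 0) (T 1) ≠ 0) :
    ∃ (A : Matrix (Fin 2) (Fin 2) K) (v w : Fin 2 → Fin 2 → K),
      IsUnit A ∧ IsUnit (of v) ∧ IsUnit (of w) ∧ ∀ i, T i = ∑ r, A i r • vecMulVec (v r) (w r) := by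
  obtain ⟨x, y, hxy, hx, hy⟩ := exists_ne_roots_of_discrim_ne_zero hT₁ hΔ
  rw [← det_add_smul_fin_two] at hx hy
  obtain ⟨v₀, w₀, h₀⟩ := exists_vecMulVec_eq_of_det_eq_zero hx
  obtain ⟨v₁, w₁, h₁⟩ := exists_vecMulVec_eq_of_det_eq_zero hy
  set s := (x - y)⁻¹
  have hs : s * (x - y) = 1 := inv_mul_cancel₀ (sub_ne_zero.2 hxy)
  have hs0 : s ≠ 0 := left_ne_zero_of_mul_eq_one hs
  have e₁ : T 1 = s • (vecMulVec v₀ w₀ - vecMulVec v₁ w₁) := by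
    linear_combination (norm := module) s • h₀ - s • h₁ - hs • T 1
  have e₀ : T 0 = (-(s * y)) • vecMulVec v₀ w₀ + (s * x) • vecMulVec v₁ w₁ := by
    linear_combination (norm := module) (-(s * y)) • h₀ + (s * x) • h₁ - hs • T 0
  have hdet : (T 1).det = -(s ^ 2 * ((of ![v₀, v₁]).det * (of ![w₀, w₁]).det)) := by
    rw [e₁, det_smul, det_vecMulVec_sub_vecMulVec, Fintype.card_fin]
    ring
  refine ⟨!![-(s * y), s * x; s, -s], ![v₀, v₁], ![w₀, w₁], ?_, ?_, ?_, ?_⟩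
  · rw [isUnit_iff_isUnit_det, det_fin_two_of, isUnit_iff_ne_zero]
    have hdetA : -(s * y) * -s - s * x * s = -s := by linear_combination (-s) * hs
    rw [hdetA]
    exact neg_ne_zero.2 hs0
  · rw [isUnit_iff_isUnit_det, isUnit_iff_ne_zero]
    exact fun h => hT₁ (by simp [hdet, h])
  · rw [isUnit_iff_isUnit_det, isUnit_iff_ne_zero]
    exact fun h => hT₁ (by simp [hdet, h])
  · intro i
    fin_cases i <;> simp [Fin.sum_univ_two, e₀, e₁, sub_eq_add_neg]

end TwoByTwo

def slice (t : ThreeQubits) (i : Fin 2) : Matrix (Fin 2) (Fin 2) ℂ :=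
  of fun j k => t (i, j, k)

lemma applyKron3_ghz_apply (A B C : Matrix (Fin 2) (Fin 2) ℂ) (x : Fin 2 × Fin 2 × Fin 2) :
    applyKron3 A B C ghz x = ∑ r, A x.1 r * B x.2.1 r * C x.2.2 r := by
  simp [applyKron3, ghz, kron3, mulVec, dotProduct, Fintype.sum_prod_type, Fin.sum_univ_two,
    Prod.ext_iff]

lemma exists_applyKron3_ghz_eq {t : ThreeQubits} (h₁ : (slice t 1).det ≠ 0)
    (hΔ : hyperdet (slice t 0) (slice t 1) ≠ 0) :
    ∃ A B C : Matrix (Fin 2) (Fin 2) ℂ, IsUnit A ∧ IsUnit B ∧ IsUnit C ∧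
      applyKron3 A B C ghz = t := by
  obtain ⟨A, v, w, hA, hv, hw, hT⟩ :=
    exists_sum_smul_vecMulVec_of_hyperdet_ne_zero (slice t) h₁ hΔ
  refine ⟨A, (of v)ᵀ, (of w)ᵀ, hA, (isUnit_transpose _).2 hv, (isUnit_transpose _).2 hw, ?_⟩
  ext ⟨i, j, k⟩
  have := congr_fun₂ (hT i) j k
  simp only [slice, of_apply, Matrix.sum_apply, Matrix.smul_apply, vecMulVec_apply,
    smul_eq_mul] at this
  rw [applyKron3_ghz_apply, this]
  simp [mul_assoc]

lemma dense_setOf_det_slice_mul_hyperdet_ne_zero :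
    Dense {t : ThreeQubits | (slice t 1).det * hyperdet (slice t 0) (slice t 1) ≠ 0} := by
  refine AnalyticOnNhd.dense_setOf_ne_zero (𝕜 := ℂ) (fun t _ => ?_) fun h => ?_
  · simp only [hyperdet, discrim, det_fin_two, slice, of_apply, Matrix.add_apply]
    fun_prop
  · -- `(H ⊗ 1 ⊗ 1)·GHZ`, with `H` the Hadamard matrix, has slices `1` and `diag(1, -1)`.
    have := congr_fun h (applyKron3 !![1, 1; 1, -1] 1 1 ghz)
    simp [hyperdet, discrim, det_fin_two, slice, applyKron3_ghz_apply, Fin.sum_univ_two] at this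

lemma mem_closure_ghzClass {ψ : ThreeQubits} (hψ : ‖ψ‖ = 1) : ψ ∈ closure ghzClass := by
  have hsub : (fun t : ThreeQubits => ‖t‖⁻¹ • t) ''
      {t | (slice t 1).det * hyperdet (slice t 0) (slice t 1) ≠ 0} ⊆ ghzClass := by
    rintro _ ⟨t, ht, rfl⟩
    obtain ⟨A, B, C, hA, hB, hC, rfl⟩ :=
      exists_applyKron3_ghz_eq (left_ne_zero_of_mul ht) (right_ne_zero_of_mul ht)
    exact ⟨A, B, C, hA, hB, hC, rfl⟩
  have hψ₀ : ψ ≠ 0 := norm_ne_zero_iff.1 (by simp [hψ])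
  have hcont : ContinuousAt (fun t : ThreeQubits => ‖t‖⁻¹ • t) ψ := by fun_prop (disch := simpa)
  simpa [hψ] using closure_mono hsub
    (mem_closure_image hcont (dense_setOf_det_slice_mul_hyperdet_ne_zero ψ))

lemma norm_le_one_of_mem_ghzClass {φ : ThreeQubits} (hφ : φ ∈ ghzClass) : ‖φ‖ ≤ 1 := by
  obtain ⟨A, B, C, -, -, -, rfl⟩ := hφ
  rw [norm_smul, norm_inv, norm_norm]
  exact inv_mul_le_one_of_le₀ le_rfl (norm_nonneg _)

/-- **Density of the GHZ class.** The set `S_GHZ` of normalized images of the GHZ state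
under invertible local operators is dense in the unit sphere of the three-qubit space:
every unit vector `ψ` is within `δ` of some such state.  Consequently
`E(ψ, S_GHZ) = 1 - sup_{φ ∈ S_GHZ} |⟨ψ,φ⟩|² = 0` for every unit vector `ψ`. -/
theorem ghzClass_dense_and_measure_zero :
    (∀ ψ : ThreeQubits, ‖ψ‖ = 1 → ∀ δ > (0 : ℝ),
      ∃ A B C : Matrix (Fin 2) (Fin 2) ℂ, IsUnit A ∧ IsUnit B ∧ IsUnit C ∧
        ‖ψ - ‖applyKron3 A B C ghz‖⁻¹ • applyKron3 A B C ghz‖ < δ) ∧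
    (∀ ψ : ThreeQubits, ‖ψ‖ = 1 →
      1 - (⨆ φ : ghzClass, ‖⟪ψ, (φ : ThreeQubits)⟫_ℂ‖ ^ 2) = 0) := by
  refine ⟨fun ψ hψ δ hδ => ?_, fun ψ hψ => ?_⟩
  · obtain ⟨_, ⟨A, B, C, hA, hB, hC, rfl⟩, hdist⟩ :=
      Metric.mem_closure_iff.1 (mem_closure_ghzClass hψ) δ hδ
    exact ⟨A, B, C, hA, hB, hC, by rwa [← dist_eq_norm]⟩
  · rw [iSup_norm_inner_sq_eq_one hψ (fun _ => norm_le_one_of_mem_ghzClass)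
      (mem_closure_ghzClass hψ), sub_self]
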